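/- Let μ = 1 (cubic NLS), α ≠ 0, N a positive integer, j an integer with 0 ≤ j ≤ N, 2j ≠ N, sign(2j − N) = sign(α), and ω > α²/(2j−N)². Then the energy of the stationary state Ψʲ_ω satisfies E[Ψʲ_ω] = −(N/3) ω^{3/2} − α³/(3(2j−N)²). -/

import Mathlib

/-!
On each half-line the energy density of `φ_{ω,a}` is `ω² sech² u (2 tanh² u − 1)` with
`u = √ω (x − a)`, whose antiderivative `ω^{3/2} (2/3 tanh³ u − tanh u)` is elementary; so each
edge contributes a cubic polynomial in `T = tanh (√ω a)`, with `T ↦ −T` on the tails. The choice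
of `aʲ` makes `T = α / ((2j − N) √ω)`, and then `(2j − N) √ω T = α` lets the edge terms and the
vertex term `α ω (1 − T²)` collapse to the closed form.
-/

open MeasureTheory Set

/-- The inverse hyperbolic tangent. -/
noncomputable def arctanh (x : ℝ) : ℝ := (1 / 2) * Real.log ((1 + x) / (1 - x))

/-- The cubic (μ = 1) soliton profile `φ_{ω,a}(x) = √(2ω) sech(√ω (x − a))`. -/
noncomputable def cubicProfile (ω a : ℝ) (x : ℝ) : ℝ :=
  Real.sqrt (2 * ω) * (1 / Real.cosh (Real.sqrt ω * (x - a)))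

open Filter Topology Real

namespace Real

theorem one_div_cosh_sq (x : ℝ) : 1 / cosh x ^ 2 = 1 - tanh x ^ 2 := by
  have := cosh_sq_sub_sinh_sq x
  have := (cosh_pos x).ne'
  rw [tanh_eq_sinh_div_cosh]
  field_simp
  linarith

theorem hasDerivAt_tanh (x : ℝ) : HasDerivAt tanh (1 / cosh x ^ 2) x := by
  have h := (hasDerivAt_sinh x).div (hasDerivAt_cosh x) (cosh_pos x).ne'
  rw [funext tanh_eq_sinh_div_cosh]
  refine h.congr_deriv ?_
  rw [← cosh_sq_sub_sinh_sq x]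
  ring

theorem tanh_eq_one_sub (x : ℝ) : tanh x = 1 - 2 / (exp (2 * x) + 1) := by
  have : exp (2 * x) = exp x * exp x := by rw [← exp_add, two_mul]
  rw [tanh_eq, this, exp_neg]
  field_simp
  ring

theorem tendsto_tanh_atTop : Tendsto tanh atTop (𝓝 1) := by
  have hexp : Tendsto (fun x : ℝ => exp (2 * x) + 1) atTop atTop :=
    tendsto_atTop_add_const_right _ 1 <|
      tendsto_exp_atTop.comp (tendsto_id.const_mul_atTop two_pos)
  simpa [funext tanh_eq_one_sub] using
    (tendsto_const_nhds (x := (1 : ℝ))).sub (hexp.const_div_atTop 2)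

end Real

theorem tanh_arctanh {x : ℝ} (hx : x ∈ Ioo (-1) 1) : tanh (arctanh x) = x := by
  rw [arctanh, ← artanh_eq_half_log (Ioo_subset_Icc_self hx)]
  exact Real.tanh_artanh hx

section TanhPowIntegral

variable {s : ℝ} (a : ℝ) (n : ℕ)

theorem hasDerivAt_tanh_pow_succ_affine (hs : s ≠ 0) (x : ℝ) :
    HasDerivAt (fun x => tanh (s * (x - a)) ^ (n + 1) / (s * (n + 1)))
      (tanh (s * (x - a)) ^ n / cosh (s * (x - a)) ^ 2) x := by
  have hinner : HasDerivAt (fun x => s * (x - a)) s x := by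
    simpa using ((hasDerivAt_id x).sub_const a).const_mul s
  have h := (((hasDerivAt_tanh _).comp x hinner).pow (n + 1)).div_const (s * (n + 1))
  refine h.congr_deriv ?_
  simp only [Function.comp_apply]
  push_cast
  field_simp

theorem tendsto_tanh_pow_succ_affine (hs : 0 < s) :
    Tendsto (fun x => tanh (s * (x - a)) ^ (n + 1) / (s * (n + 1))) atTop
      (𝓝 (1 / (s * (n + 1)))) := by
  have hinner : Tendsto (fun x => s * (x - a)) atTop atTop :=
    (tendsto_atTop_add_const_right _ (-a) tendsto_id).const_mul_atTop hs
  simpa using ((tendsto_tanh_atTop.comp hinner).pow (n + 1)).div_const (s * (n + 1))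

variable {n}

theorem tanh_pow_div_cosh_sq_nonneg (hn : Even n) (u : ℝ) : 0 ≤ tanh u ^ n / cosh u ^ 2 :=
  div_nonneg (hn.pow_nonneg _) (sq_nonneg _)

theorem integrableOn_Ioi_tanh_pow_div_cosh_sq (hs : 0 < s) (hn : Even n) (c : ℝ) :
    IntegrableOn (fun x => tanh (s * (x - a)) ^ n / cosh (s * (x - a)) ^ 2) (Ioi c) :=
  integrableOn_Ioi_deriv_of_nonneg' (fun x _ => hasDerivAt_tanh_pow_succ_affine a n hs.ne' x)
    (fun _ _ => tanh_pow_div_cosh_sq_nonneg hn _) (tendsto_tanh_pow_succ_affine a n hs)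

theorem integral_Ioi_tanh_pow_div_cosh_sq (hs : 0 < s) (hn : Even n) (c : ℝ) :
    ∫ x in Ioi c, tanh (s * (x - a)) ^ n / cosh (s * (x - a)) ^ 2
      = (1 - tanh (s * (c - a)) ^ (n + 1)) / (s * (n + 1)) := by
  rw [integral_Ioi_of_hasDerivAt_of_nonneg'
    (fun x _ => hasDerivAt_tanh_pow_succ_affine a n hs.ne' x)
    (fun _ _ => tanh_pow_div_cosh_sq_nonneg hn _) (tendsto_tanh_pow_succ_affine a n hs)]
  ring

end TanhPowIntegral

section CubicProfile

variable {ω : ℝ} (a : ℝ)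

theorem cubicProfile_sq (hω : 0 ≤ ω) (x : ℝ) :
    cubicProfile ω a x ^ 2 = 2 * ω * (1 - tanh (√ω * (x - a)) ^ 2) := by
  rw [cubicProfile, mul_pow, sq_sqrt (by positivity), div_pow, one_pow, one_div_cosh_sq]

theorem hasDerivAt_cubicProfile (x : ℝ) :
    HasDerivAt (cubicProfile ω a)
      (-(√ω * tanh (√ω * (x - a)) * cubicProfile ω a x)) x := by
  have hinner : HasDerivAt (fun x => √ω * (x - a)) √ω x := by
    simpa using ((hasDerivAt_id x).sub_const a).const_mul √ω
  have h := (((hasDerivAt_cosh _).comp x hinner).inv (cosh_pos _).ne').const_mul √(2 * ω)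
  have hφ : cubicProfile ω a = fun x => √(2 * ω) * (cosh (√ω * (x - a)))⁻¹ := by
    funext x; rw [cubicProfile, one_div]
  rw [hφ]
  refine h.congr_deriv ?_
  rw [tanh_eq_sinh_div_cosh, Function.comp_apply]
  field_simp

theorem cubicProfile_energyDensity (hω : 0 ≤ ω) (x : ℝ) :
    deriv (cubicProfile ω a) x ^ 2 / 2 - cubicProfile ω a x ^ 4 / 4
      = ω ^ 2 * (2 * (tanh (√ω * (x - a)) ^ 2 / cosh (√ω * (x - a)) ^ 2)
          - 1 / cosh (√ω * (x - a)) ^ 2) := by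
  have hφ := cubicProfile_sq a hω x
  rw [(hasDerivAt_cubicProfile a x).deriv, show cubicProfile ω a x ^ 4
    = (cubicProfile ω a x ^ 2) ^ 2 by ring, neg_sq, mul_pow, mul_pow, sq_sqrt hω, hφ,
    div_eq_mul_one_div (tanh _ ^ 2), one_div_cosh_sq]
  ring

theorem integral_Ioi_cubicProfile_energyDensity (hω : 0 < ω) :
    ∫ x in Ioi (0 : ℝ), (deriv (cubicProfile ω a) x ^ 2 / 2 - cubicProfile ω a x ^ 4 / 4)
      = √ω ^ 3 * (2 / 3 * tanh (√ω * a) ^ 3 - tanh (√ω * a) - 1 / 3) := by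
  have hs : 0 < √ω := sqrt_pos.2 hω
  have hint₀ := integrableOn_Ioi_tanh_pow_div_cosh_sq a hs Even.zero 0
  have hI₀ := integral_Ioi_tanh_pow_div_cosh_sq a hs Even.zero 0
  simp only [pow_zero] at hint₀ hI₀
  simp_rw [cubicProfile_energyDensity a hω.le]
  rw [integral_const_mul, integral_sub
      ((integrableOn_Ioi_tanh_pow_div_cosh_sq a hs even_two 0).const_mul 2) hint₀,
    integral_const_mul, integral_Ioi_tanh_pow_div_cosh_sq a hs even_two, hI₀,
    zero_sub, mul_neg, tanh_neg,
    show ω ^ 2 = √ω ^ 4 by rw [show 4 = 2 * 2 from rfl, pow_mul, sq_sqrt hω.le]]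
  push_cast
  field_simp
  ring

end CubicProfile

theorem stmt_7_general (α : ℝ) (N : ℕ)
    (j : ℕ) (hjN : 2 * j ≠ N)
    (ω : ℝ) (hω : ω > α ^ 2 / (2 * (j : ℝ) - N) ^ 2)
    (aj : ℝ) (haj : aj = 1 / Real.sqrt ω * arctanh (α / ((2 * (j : ℝ) - N) * Real.sqrt ω))) :
    -- the energy of the stationary state `Ψʲ_ω` (j bumps, N − j tails) of the cubic NLS
    -- with delta vertex of strength `α` equals `−(N/3)ω^{3/2} − α³/(3(2j−N)²)`
    (j : ℝ) * (∫ x in Ioi (0 : ℝ),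
        ((deriv (cubicProfile ω aj) x) ^ 2 / 2 - (cubicProfile ω aj x) ^ 4 / 4))
      + ((N : ℝ) - j) * (∫ x in Ioi (0 : ℝ),
        ((deriv (cubicProfile ω (-aj)) x) ^ 2 / 2 - (cubicProfile ω (-aj) x) ^ 4 / 4))
      + α / 2 * (cubicProfile ω aj 0) ^ 2
      = -((N : ℝ) / 3) * ω ^ ((3 : ℝ) / 2) - α ^ 3 / (3 * (2 * (j : ℝ) - N) ^ 2) := by
  set d : ℝ := 2 * j - N
  have hd : d ≠ 0 := by
    simpa [d, sub_eq_zero] using (by exact_mod_cast hjN : (2 * j : ℝ) ≠ N)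
  have hω0 : 0 < ω := lt_of_le_of_lt (by positivity) hω
  have hs : 0 < √ω := sqrt_pos.2 hω0
  set β := α / (d * √ω)
  have hβ : β ∈ Ioo (-1) 1 := by
    have : β ^ 2 < 1 := by
      rw [div_pow, mul_pow, sq_sqrt hω0.le, div_lt_one (by positivity)]
      rwa [gt_iff_lt, div_lt_iff₀ (by positivity), mul_comm] at hω
    constructor <;> nlinarith
  have htanh : tanh (√ω * aj) = β := by
    rw [haj, ← mul_assoc, mul_one_div_cancel hs.ne', one_mul, tanh_arctanh hβ]
  rw [integral_Ioi_cubicProfile_energyDensity aj hω0,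
    integral_Ioi_cubicProfile_energyDensity (-aj) hω0, cubicProfile_sq aj hω0.le, mul_neg,
    tanh_neg, zero_sub, mul_neg, tanh_neg, htanh,
    show ω ^ ((3 : ℝ) / 2) = √ω ^ 3 by
      rw [sqrt_eq_rpow, ← rpow_natCast, ← rpow_mul hω0.le]; norm_num,
    show 2 * ω = 2 * √ω ^ 2 by rw [sq_sqrt hω0.le], show (N : ℝ) = 2 * j - d by ring]
  simp only [β]
  field_simp
  ring

theorem stmt_7 (α : ℝ) (hα : α ≠ 0) (N : ℕ) (hN : 0 < N)
    (j : ℕ) (hj : j ≤ N) (hjN : 2 * j ≠ N)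
    (hsign : (0 < α ∧ (N : ℤ) < 2 * j) ∨ (α < 0 ∧ (2 * j : ℤ) < N))
    (ω : ℝ) (hω : ω > α ^ 2 / (2 * (j : ℝ) - N) ^ 2)
    (aj : ℝ) (haj : aj = 1 / Real.sqrt ω * arctanh (α / ((2 * (j : ℝ) - N) * Real.sqrt ω))) :
    -- the energy of the stationary state `Ψʲ_ω` (j bumps, N − j tails) of the cubic NLS
    -- with delta vertex of strength `α` equals `−(N/3)ω^{3/2} − α³/(3(2j−N)²)`
    (j : ℝ) * (∫ x in Ioi (0 : ℝ),
        ((deriv (cubicProfile ω aj) x) ^ 2 / 2 - (cubicProfile ω aj x) ^ 4 / 4))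
      + ((N : ℝ) - j) * (∫ x in Ioi (0 : ℝ),
        ((deriv (cubicProfile ω (-aj)) x) ^ 2 / 2 - (cubicProfile ω (-aj) x) ^ 4 / 4))
      + α / 2 * (cubicProfile ω aj 0) ^ 2
      = -((N : ℝ) / 3) * ω ^ ((3 : ℝ) / 2) - α ^ 3 / (3 * (2 * (j : ℝ) - N) ^ 2) :=
  stmt_7_general α N j hjN ω hω aj haj
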